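/- Let ∅ ≠ V ⊊ [n] and let Σ = (x_0,…,x_m) be the elements of [n]∖V taken in an arbitrary order. Then the standard matching M_Σ restricts to a perfect matching of the graph Γ_n(V): for every vertex σ of Γ_n(V), level(σ,Σ) is defined and M_Σ(σ) is again a vertex of Γ_n(V). -/

import Mathlib

/-!
If `level(σ,Σ)` were undefined, `σ` and the tuple of singletons `({x_0}|…|{x_m})` would be
suffixes of one another. As `V` meets `[n]`, `σ` is not made of these singletons alone, so its
first block precedes all of them; being disjoint from `[n]∖V`, that block would lie in `V`.
The level `x` lies in `[n]∖V`, and flipping at `x ∉ V` keeps a first block not contained in `V`.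
-/

open Finset

/-- union of a list of finsets -/
def lunion {α : Type*} [DecidableEq α] (L : List (Finset α)) : Finset α := L.foldr (· ∪ ·) ∅

/-- `IsOSP A L` : `L` is an ordered set partition of the finite set `A`. -/
def IsOSP {α : Type*} [DecidableEq α] (A : Finset α) (L : List (Finset α)) : Prop :=
  (∀ B ∈ L, B.Nonempty) ∧ L.Pairwise (fun B C => Disjoint B C) ∧ lunion L = A

/-- `seenBlk L x` = `A_1 ∪ … ∪ A_{i(x)}`, the union of the blocks of `L` up to and
including the block containing `x`. -/
def seenBlk {α : Type*} [DecidableEq α] : List (Finset α) → α → Finset α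
  | [], _ => ∅
  | A :: rest, x => if x ∈ A then A else A ∪ seenBlk rest x

/-- rank (1-based position in the increasing order) of `x` in the finset `S`. -/
def rankIn (S : Finset ℕ) (x : ℕ) : ℕ := (S.filter (fun y => y ≤ x)).card

/-- the set `F(σ)` of flippable colors, for an ordered set partition of `[n] = {0,…,n}` -/
def Fset (n : ℕ) (L : List (Finset ℕ)) : Finset ℕ :=
  match L.getLast? with
  | some A => if A.card = 1 then Finset.range (n+1) \ A else Finset.range (n+1)
  | none => Finset.range (n+1)

/-- the flip `F(σ,x)` of an ordered set partition with respect to the color `x` -/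
def flipOSP (x : ℕ) : List (Finset ℕ) → List (Finset ℕ)
  | [] => []
  | A :: rest =>
    if x ∈ A then
      if 2 ≤ A.card then {x} :: A.erase x :: rest
      else
        match rest with
        | [] => [A]
        | B :: rest' => insert x B :: rest'
    else A :: flipOSP x rest

def levelAux : List ℕ → List (Finset ℕ) → Option ℕ
  | [], _ => none
  | _ :: _, [] => none
  | x :: xs, A :: As => if A = {x} then levelAux xs As else some x

/-- `levelFn Σ σ` = `level(σ,Σ)` (as an `Option`; `none` = undefined). -/
def levelFn (Sig : List ℕ) (L : List (Finset ℕ)) : Option ℕ :=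
  levelAux Sig.reverse L.reverse

/-- ordered set partitions of `[n] = {0,…,n}` -/
def OSPn (n : ℕ) : Type := {L : List (Finset ℕ) // IsOSP (Finset.range (n+1)) L}

/-- the graph `Γ_n`: vertices are the ordered set partitions of `[n]`, with `σ` and
`F(σ,x)` joined by an edge for every `x ∈ F(σ)`. -/
def Gamma (n : ℕ) : SimpleGraph (OSPn n) where
  Adj σ τ := σ ≠ τ ∧
    ((∃ x ∈ Fset n σ.1, τ.1 = flipOSP x σ.1) ∨ (∃ x ∈ Fset n τ.1, σ.1 = flipOSP x τ.1))
  symm := ⟨fun σ τ h => ⟨h.1.symm, h.2.symm⟩⟩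
  loopless := ⟨fun σ h => h.1 rfl⟩

/-- a matching: a set of edges of `G`, no two of which share a vertex -/
def IsMatchingSet {V : Type*} (G : SimpleGraph V) (M : Set (Sym2 V)) : Prop :=
  (∀ e ∈ M, e ∈ G.edgeSet) ∧ ∀ e ∈ M, ∀ f ∈ M, ∀ v : V, v ∈ e → v ∈ f → e = f

/-- a vertex is critical w.r.t. `M` if it lies in no edge of `M` -/
def CriticalVx {V : Type*} (M : Set (Sym2 V)) (v : V) : Prop := ∀ e ∈ M, v ∉ e

/-- the standard matching `M_Σ`, as a set of edges of `Γ_n` -/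
def MSigma (n : ℕ) (Sig : List ℕ) : Set (Sym2 (OSPn n)) :=
  {e | ∃ σ τ : OSPn n, ∃ x, levelFn Sig σ.1 = some x ∧ τ.1 = flipOSP x σ.1 ∧ e = s(σ, τ)}

/-- a list of edges is alternating w.r.t. `M` -/
def Alternates {V : Type*} (M : Set (Sym2 V)) (es : List (Sym2 V)) : Prop :=
  es.Chain' (fun e f => e ∈ M ↔ f ∉ M)

def IsProperlyAlternating {V : Type*} {G : SimpleGraph V} (M : Set (Sym2 V)) {u v : V}
    (p : G.Walk u v) : Prop :=
  Alternates M p.edges ∧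
  (∀ e, p.edges.head? = some e → e ∉ M → CriticalVx M u) ∧
  (∀ e, p.edges.getLast? = some e → e ∉ M → CriticalVx M v)

def IsSemiAugmenting {V : Type*} {G : SimpleGraph V} (M : Set (Sym2 V)) {u v : V}
    (p : G.Walk u v) : Prop :=
  IsProperlyAlternating M p ∧
  (∃ e, p.edges.head? = some e ∧ e ∈ M) ∧ (∃ e, p.edges.getLast? = some e ∧ e ∉ M)

def IsNonAugmenting {V : Type*} {G : SimpleGraph V} (M : Set (Sym2 V)) {u v : V}
    (p : G.Walk u v) : Prop :=
  Alternates M p.edges ∧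
  (∃ e, p.edges.head? = some e ∧ e ∈ M) ∧ (∃ e, p.edges.getLast? = some e ∧ e ∈ M)

def IsWeaklySemiAugmenting {V : Type*} {G : SimpleGraph V} (M : Set (Sym2 V)) {u v : V}
    (p : G.Walk u v) : Prop :=
  Alternates M p.edges ∧
  (p.edges = [] ∨
    ((∃ e, p.edges.head? = some e ∧ e ∈ M) ∧ (∃ e, p.edges.getLast? = some e ∧ e ∉ M)))

/-- a partial ordered set partition, as a list of pairs of blocks `(A_i, B_i)` -/
abbrev RawPOSP := List (Finset ℕ × Finset ℕ)

def carrierP (σ : RawPOSP) : Finset ℕ := (σ.map Prod.fst).foldr (· ∪ ·) ∅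
def colorsP (σ : RawPOSP) : Finset ℕ := (σ.map Prod.snd).foldr (· ∪ ·) ∅

/-- `σ` is a partial ordered set partition of `[n] = {0,…,n}` -/
def IsPOSP (n : ℕ) (σ : RawPOSP) : Prop :=
  σ ≠ [] ∧ (∀ p ∈ σ, p.2.Nonempty ∧ p.2 ⊆ p.1 ∧ p.1 ⊆ Finset.range (n+1)) ∧
  (σ.map Prod.fst).Pairwise (fun A B => Disjoint A B)

/-- view an ordered set partition as a partial one, with `B_i = A_i` -/
def toPairs (L : List (Finset ℕ)) : RawPOSP := L.map (fun A => (A, A))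

def dlAux (S : Finset ℕ) : Finset ℕ → RawPOSP → RawPOSP
  | _, [] => []
  | acc, (A, B) :: rest =>
    if B ⊆ S then dlAux S (acc ∪ A) rest
    else (acc ∪ A, B \ S) :: dlAux S ∅ rest

/-- the deletion `dl(σ, S)` -/
def dl (σ : RawPOSP) (S : Finset ℕ) : RawPOSP := dlAux S ∅ σ

/-- `D(σ, S)` = `A_i ∪ … ∪ A_t` for the minimal `i` with `B_i ∪ … ∪ B_t ⊆ S`, else `∅` -/
def Dfun (S : Finset ℕ) : RawPOSP → Finset ℕ
  | [] => ∅
  | b :: rest => if colorsP (b :: rest) ⊆ S then carrierP (b :: rest) else Dfun S rest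

def nodesAux : Finset ℕ → RawPOSP → Finset (Finset ℕ × ℕ)
  | _, [] => ∅
  | acc, (A, B) :: rest => B.image (fun x => (acc ∪ A, x)) ∪ nodesAux (acc ∪ A) rest

/-- the node set `V(σ)` of a partial ordered set partition -/
def nodesP (σ : RawPOSP) : Finset (Finset ℕ × ℕ) := nodesAux ∅ σ

/-- an ordered set partition of the whole of `[n]`, viewed as a partial one -/
def IsFullOSP (n : ℕ) (σ : RawPOSP) : Prop :=
  IsPOSP n σ ∧ carrierP σ = Finset.range (n+1) ∧ ∀ p ∈ σ, p.2 = p.1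

/-- simplices of the standard chromatic subdivision `χ(Δⁿ)` -/
def IsSimplexChi (n : ℕ) (W : Finset (Finset ℕ × ℕ)) : Prop :=
  ∃ σ : RawPOSP, IsFullOSP n σ ∧ W ⊆ nodesP σ

/-- a linked tuple of partial ordered set partitions -/
def Linked (T : List RawPOSP) : Prop := T.Chain' (fun σ τ => colorsP σ = carrierP τ)

/-- vertices of `χ^d(Δⁿ)`: linked `d`-tuples whose last entry has a singleton color set -/
def IsVertexChi (n d : ℕ) (v : List RawPOSP) : Prop :=
  v.length = d ∧ (∀ σ ∈ v, IsPOSP n σ) ∧ Linked v ∧ (colorsP (v.getLastD [])).card = 1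

/-- the `n`-simplices of `χ^d(Δⁿ)`: linked `d`-tuples of ordered set partitions of `[n]` -/
def IsTopSimplexChi (n d : ℕ) (T : List RawPOSP) : Prop :=
  T.length = d ∧ Linked T ∧
  ∀ σ ∈ T, IsPOSP n σ ∧ carrierP σ = Finset.range (n+1) ∧ ∀ p ∈ σ, p.2 = p.1

def faceAux : Finset ℕ → List RawPOSP → List RawPOSP
  | _, [] => []
  | S, σ :: rest => dl σ S :: faceAux (Dfun S σ) rest

/-- the face of the simplex `T` of `χ^d(Δⁿ)` determined by `S_d = S`:
`(dl(σ_1,S_1),…,dl(σ_d,S_d))` with `S_i = D(σ_{i+1},S_{i+1})`. -/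
def faceT (T : List RawPOSP) (S : Finset ℕ) : List RawPOSP := (faceAux S T.reverse).reverse

/-- the vertex of the `n`-simplex `T` colored `x` -/
def vertexOf (T : List RawPOSP) (x : ℕ) : List RawPOSP :=
  faceT T ((colorsP (T.getLastD [])) \ {x})

/-- relabel all elements by `f` -/
def relabel (f : ℕ → ℕ) (T : List RawPOSP) : List RawPOSP :=
  T.map (fun σ => σ.map (fun p => (p.1.image f, p.2.image f)))

/-- the unique order preserving bijection `I → J` (extended by the identity) -/
noncomputable def oMap (I J : Finset ℕ) (h : I.card = J.card) (x : ℕ) : ℕ :=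
  if hx : x ∈ I then ((J.orderIsoOfFin h.symm) ((I.orderIsoOfFin rfl).symm ⟨x, hx⟩) : ℕ)
  else x

/-- a compliant binary labeling of the vertices of `χ^d(Δⁿ)` -/
def Compliant (n d : ℕ) (lab : List RawPOSP → Bool) : Prop :=
  ∀ I J : Finset ℕ, I ⊆ Finset.range (n+1) → J ⊆ Finset.range (n+1) →
    ∀ h : I.card = J.card, ∀ v : List RawPOSP, IsVertexChi n d v →
      carrierP v.headI ⊆ I → lab (relabel (oMap I J h) v) = lab v

/-- the number of ordered set partitions of `[n] = {0,…,n}` -/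
noncomputable def fOSP (n : ℕ) : ℕ :=
  Nat.card {L : List (Finset ℕ) // IsOSP (Finset.range (n+1)) L}

/-- membership in the vertex set of `Γ_n(V)` -/
def InGammaV (V : Finset ℕ) (L : List (Finset ℕ)) : Prop :=
  ∃ A rest, L = A :: rest ∧ ¬ A ⊆ V

/-- a prefix in `V`: a tuple of nonempty pairwise disjoint subsets of `V` -/
def IsPrefixIn {α : Type*} [DecidableEq α] (V : Finset α) (P : List (Finset α)) : Prop :=
  (∀ A ∈ P, A.Nonempty ∧ A ⊆ V) ∧ P.Pairwise (fun A B => Disjoint A B)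

/-- membership in the vertex set of `Γ_n(V,𝒜)` -/
def InGammaVA (V : Finset ℕ) (P : List (Finset ℕ)) (L : List (Finset ℕ)) : Prop :=
  ∃ A rest, L = P ++ A :: rest ∧ ¬ A ⊆ V

/-- conducting bipartite graph of the first type -/
def ConductingFirst {V : Type*} (G : SimpleGraph V) (A B : Set V) : Prop :=
  A.ncard = B.ncard + 1 ∧
  ∀ v ∈ A, ∃ M : Set (Sym2 V), IsMatchingSet G M ∧ ∀ u, CriticalVx M u ↔ u = v

/-- conducting bipartite graph of the second type -/
def ConductingSecond {V : Type*} (G : SimpleGraph V) (A B : Set V) : Prop :=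
  A.ncard = B.ncard ∧
  ∀ v ∈ A, ∀ w ∈ B, ∃ M : Set (Sym2 V), IsMatchingSet G M ∧
    ∀ u, CriticalVx M u ↔ (u = v ∨ u = w)

/-- the vertex of the `n`-simplex `(As ‖ Bs)` of `χ²(Δⁿ)` colored `x` is internal -/
def InternalVx (n : ℕ) (As Bs : List (Finset ℕ)) (x : ℕ) : Prop :=
  carrierP (dl (toPairs As) (Finset.range (n+1) \ seenBlk Bs x)) = Finset.range (n+1)

section ListUnion

variable {α : Type*} [DecidableEq α]

theorem lunion_cons (A : Finset α) (L : List (Finset α)) : lunion (A :: L) = A ∪ lunion L := rfl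

theorem mem_lunion {a : α} {L : List (Finset α)} : a ∈ lunion L ↔ ∃ B ∈ L, a ∈ B := by
  induction L with
  | nil => simp [lunion]
  | cons A L ih => simp [lunion_cons, ih]

theorem subset_lunion {B : Finset α} {L : List (Finset α)} (h : B ∈ L) : B ⊆ lunion L :=
  fun _ ha => mem_lunion.mpr ⟨B, h, ha⟩

theorem lunion_mono {L M : List (Finset α)} (h : L ⊆ M) : lunion L ⊆ lunion M := by
  intro a ha
  obtain ⟨B, hB, haB⟩ := mem_lunion.mp ha
  exact mem_lunion.mpr ⟨B, h hB, haB⟩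

theorem lunion_map_singleton (l : List α) : lunion (l.map ({·})) = l.toFinset := by
  ext a
  simp [mem_lunion]

theorem disjoint_lunion_iff {A : Finset α} {L : List (Finset α)} :
    Disjoint A (lunion L) ↔ ∀ C ∈ L, Disjoint A C := by
  simp only [Finset.disjoint_left, mem_lunion]
  grind

theorem pairwise_disjoint_cons_iff {A : Finset α} {L : List (Finset α)} :
    (A :: L).Pairwise Disjoint ↔ Disjoint A (lunion L) ∧ L.Pairwise Disjoint := by
  rw [List.pairwise_cons, disjoint_lunion_iff]

end ListUnion

theorem Finset.eq_singleton_of_mem_of_not_two_le {α : Type*} {A : Finset α} {x : α} (hx : x ∈ A)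
    (h : ¬ 2 ≤ #A) : A = {x} :=
  eq_singleton_iff_unique_mem.mpr ⟨hx, fun _ hy => card_le_one.mp (by omega) _ hy _ hx⟩

section Flip

theorem lunion_flipOSP (x : ℕ) (L : List (Finset ℕ)) : lunion (flipOSP x L) = lunion L := by
  induction L using flipOSP.induct x with
  | case1 => rfl
  | case2 A rest hx hA =>
    simp only [flipOSP, if_pos hx, if_pos hA, lunion_cons, ← union_assoc, ← insert_eq,
      insert_erase hx]
  | case3 A hx hA => simp [flipOSP, hx, hA]
  | case4 A hx hA B rest =>
    simp only [flipOSP, if_pos hx, if_neg hA, lunion_cons]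
    rw [eq_singleton_of_mem_of_not_two_le hx hA, insert_eq, union_assoc]
  | case5 A rest hx ih => simp only [flipOSP, if_neg hx, lunion_cons, ih]

theorem nonempty_of_mem_flipOSP (x : ℕ) {L : List (Finset ℕ)} (h : ∀ B ∈ L, B.Nonempty) :
    ∀ B ∈ flipOSP x L, B.Nonempty := by
  induction L using flipOSP.induct x with
  | case1 => simp [flipOSP]
  | case2 A rest hx hA =>
    have : (A.erase x).Nonempty := by rw [← card_pos, card_erase_of_mem hx]; omega
    simp_all [flipOSP]
  | case3 A hx hA => simpa [flipOSP, hx, hA] using h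
  | case4 A hx hA B rest =>
    obtain rfl := eq_singleton_of_mem_of_not_two_le hx hA
    simp_all [flipOSP]
  | case5 A rest hx ih => simp_all [flipOSP]

theorem pairwise_disjoint_flipOSP (x : ℕ) {L : List (Finset ℕ)} (h : L.Pairwise Disjoint) :
    (flipOSP x L).Pairwise Disjoint := by
  induction L using flipOSP.induct x with
  | case1 => simp [flipOSP]
  | case2 A rest hx hA =>
    rw [pairwise_disjoint_cons_iff] at h
    simp only [flipOSP, if_pos hx, if_pos hA, pairwise_disjoint_cons_iff, lunion_cons]
    refine ⟨?_, h.1.mono_left (erase_subset x A), h.2⟩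
    have hx' : x ∉ lunion rest := disjoint_left.mp h.1 hx
    simp [hx']
  | case3 A hx hA => simp [flipOSP, hx, hA]
  | case4 A hx hA B rest =>
    simp only [pairwise_disjoint_cons_iff, lunion_cons,
      eq_singleton_of_mem_of_not_two_le hx hA] at h
    simp only [flipOSP, if_pos hx, if_neg hA, pairwise_disjoint_cons_iff, insert_eq,
      disjoint_union_left]
    exact ⟨⟨h.1.mono_right subset_union_right, h.2.1⟩, h.2.2⟩
  | case5 A rest hx ih =>
    rw [pairwise_disjoint_cons_iff] at h
    simp only [flipOSP, if_neg hx, pairwise_disjoint_cons_iff, lunion_flipOSP]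
    exact ⟨h.1, ih h.2⟩

theorem IsOSP.flipOSP {S : Finset ℕ} {L : List (Finset ℕ)} (h : IsOSP S L) (x : ℕ) :
    IsOSP S (flipOSP x L) :=
  ⟨nonempty_of_mem_flipOSP x h.1, pairwise_disjoint_flipOSP x h.2.1,
    (lunion_flipOSP x L).trans h.2.2⟩

theorem InGammaV.flipOSP {V : Finset ℕ} {L : List (Finset ℕ)} {x : ℕ} (h : InGammaV V L)
    (hx : x ∉ V) : InGammaV V (flipOSP x L) := by
  obtain ⟨A, rest, rfl, hA⟩ := h
  by_cases hxA : x ∈ A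
  · by_cases hc : 2 ≤ #A
    · exact ⟨{x}, A.erase x :: rest, by simp [_root_.flipOSP, hxA, hc], by simpa using hx⟩
    · cases rest with
      | nil => exact ⟨A, [], by simp [_root_.flipOSP, hxA, hc], hA⟩
      | cons B rest =>
        exact ⟨insert x B, rest, by simp [_root_.flipOSP, hxA, hc],
          fun hsub => hx (hsub (mem_insert_self x B))⟩
  · exact ⟨A, _root_.flipOSP x rest, by simp [_root_.flipOSP, hxA], hA⟩

end Flip

section Level

theorem mem_of_levelAux_eq_some {xs : List ℕ} {Ls : List (Finset ℕ)} {x : ℕ}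
    (h : levelAux xs Ls = some x) : x ∈ xs := by
  induction xs, Ls using levelAux.induct with
  | case1 => simp [levelAux] at h
  | case2 => simp [levelAux] at h
  | case3 y xs As ih => simp_all [levelAux]
  | case4 y xs A As hA => simp_all [levelAux]

theorem mem_of_levelFn_eq_some {Sig : List ℕ} {L : List (Finset ℕ)} {x : ℕ}
    (h : levelFn Sig L = some x) : x ∈ Sig :=
  List.mem_reverse.mp (mem_of_levelAux_eq_some h)

theorem prefix_or_prefix_of_levelAux_eq_none {xs : List ℕ} {Ls : List (Finset ℕ)}
    (h : levelAux xs Ls = none) : xs.map ({·}) <+: Ls ∨ Ls <+: xs.map ({·}) := by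
  induction xs, Ls using levelAux.induct with
  | case1 Ls => simp
  | case2 => simp
  | case3 y xs As ih => simpa [levelAux] using ih (by simpa [levelAux] using h)
  | case4 y xs A As hA => simp [levelAux, hA] at h

theorem suffix_or_suffix_of_levelFn_eq_none {Sig : List ℕ} {L : List (Finset ℕ)}
    (h : levelFn Sig L = none) : Sig.map ({·}) <:+ L ∨ L <:+ Sig.map ({·}) := by
  simpa [← List.reverse_prefix, ← List.map_reverse] using
    prefix_or_prefix_of_levelAux_eq_none h

theorem levelFn_ne_none {S V : Finset ℕ} {Sig : List ℕ} {L : List (Finset ℕ)} {v : ℕ}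
    (hL : IsOSP S L) (hLV : InGammaV V L) (hv : v ∈ V) (hvS : v ∈ S)
    (hSig : ∀ y, y ∈ Sig ↔ y ∈ S \ V) : levelFn Sig L ≠ none := by
  obtain ⟨hne, hdisj, hcover⟩ := hL
  have not_sub : ¬ L ⊆ Sig.map ({·}) := fun hsub => by
    have : v ∈ Sig := by simpa [lunion_map_singleton] using lunion_mono hsub (hcover ▸ hvS)
    exact (mem_sdiff.mp ((hSig v).mp this)).2 hv
  intro h
  rcases suffix_or_suffix_of_levelFn_eq_none h with ⟨t, rfl⟩ | hsuf
  · obtain ⟨A, rest, hL, hAV⟩ := hLV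
    cases t with
    | nil => exact not_sub (by simp)
    | cons A' t =>
      obtain ⟨rfl, -⟩ := List.cons.inj hL
      obtain ⟨a, haA, haV⟩ := Finset.not_subset.mp hAV
      have haS : a ∈ S := hcover ▸ subset_lunion List.mem_cons_self haA
      have haSig : a ∈ Sig := (hSig a).mpr (mem_sdiff.mpr ⟨haS, haV⟩)
      have hdisj' := (List.pairwise_cons.mp hdisj).1 {a} (by simp [haSig])
      exact disjoint_left.mp hdisj' haA (mem_singleton_self a)
  · exact not_sub hsuf.subset

end Level

theorem statement12_general (n : ℕ) (V : Finset ℕ) (hne : V.Nonempty)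
    (hV : V ⊂ Finset.range (n + 1))
    (Sig : List ℕ)
    (hmem : ∀ y, y ∈ Sig ↔ y ∈ Finset.range (n + 1) \ V) :
    ∀ σ : OSPn n, InGammaV V σ.1 →
      ∃ x, levelFn Sig σ.1 = some x ∧
        InGammaV V (flipOSP x σ.1) ∧
        ∃ τ : OSPn n, τ.1 = flipOSP x σ.1 ∧ s(σ, τ) ∈ MSigma n Sig := by
  intro σ hσ
  obtain ⟨v, hv⟩ := hne
  obtain ⟨x, hx⟩ :=
    Option.ne_none_iff_exists'.mp (levelFn_ne_none σ.2 hσ hv (hV.subset hv) hmem)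
  have hxV : x ∉ V := (mem_sdiff.mp ((hmem x).mp (mem_of_levelFn_eq_some hx))).2
  let τ : OSPn n := ⟨flipOSP x σ.1, σ.2.flipOSP x⟩
  exact ⟨x, hx, hσ.flipOSP hxV, τ, rfl, σ, τ, x, hx, rfl, rfl⟩

/-- For `∅ ≠ V ⊊ [n]` and `Σ` an ordering of `[n]∖V`, the standard matching `M_Σ`
restricts to a perfect matching of `Γ_n(V)`: for every vertex `σ` of `Γ_n(V)`,
`level(σ,Σ)` is defined and `M_Σ(σ)` is again a vertex of `Γ_n(V)`. -/
theorem statement12 (n : ℕ) (V : Finset ℕ) (hne : V.Nonempty)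
    (hV : V ⊂ Finset.range (n + 1))
    (Sig : List ℕ) (hnd : Sig.Nodup)
    (hmem : ∀ y, y ∈ Sig ↔ y ∈ Finset.range (n + 1) \ V) :
    ∀ σ : OSPn n, InGammaV V σ.1 →
      ∃ x, levelFn Sig σ.1 = some x ∧
        InGammaV V (flipOSP x σ.1) ∧
        ∃ τ : OSPn n, τ.1 = flipOSP x σ.1 ∧ s(σ, τ) ∈ MSigma n Sig :=
  statement12_general n V hne hV Sig hmem
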